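/- Let G = (X, E, δ, X₀) be an NFA with observable events E_o, secret states X_S, natural projection P, and observer G_obs. Fix K ≥ 0 and construct the state-trees rooted at every observer state q ∈ X_obs with q ∩ X_S ≠ ∅. If some node (x₁, x₂) occurring in these state-trees satisfies x₂ = ∅, then G is not infinite-step weak opaque. -/
import Mathlib


namespace Opacity

variable {X E : Type*}

/-- Extension of a nondeterministic transition function `δ : X × E → Set X`
to strings: `dStr δ x ε = {x}` and `dStr δ x (e·s) = ⋃ x' ∈ δ x e, dStr δ x' s`. -/
def dStr (δ : X → E → Set X) : X → List E → Set X
  | x, [] => {x}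
  | x, e :: s => ⋃ x' ∈ δ x e, dStr δ x' s

/-- Extension of the transition function to sets of states. -/
def dSet (δ : X → E → Set X) (Q : Set X) (s : List E) : Set X :=
  ⋃ x ∈ Q, dStr δ x s

/-- The natural projection `P : E* → E_o*`, deleting all unobservable events. -/
noncomputable def proj (Eo : Set E) : List E → List E
  | [] => []
  | e :: s => @ite _ (e ∈ Eo) (Classical.propDecidable _) (e :: proj Eo s) (proj Eo s)

/-- Unobservable reach `UR(Q)`. -/
def UR (δ : X → E → Set X) (Eo : Set E) (Q : Set X) : Set X :=
  {x' | ∃ x ∈ Q, ∃ s : List E, x' ∈ dStr δ x s ∧ proj Eo s = []}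

/-- Observable reach `R(Q, e_o)` via one observable event. -/
def oR (δ : X → E → Set X) (Eo : Set E) (Q : Set X) (eo : E) : Set X :=
  {x | ∃ x' ∈ Q, ∃ s : List E, x ∈ dStr δ x' s ∧ proj Eo s = [eo]}

/-- The observer's transition function `f_obs(q, e_o) = R(q, e_o)`, extended to
observation sequences.  It is totalized: since `R(∅, e_o) = ∅`, the partial
function `f_obs` is defined on `(q, w)` exactly when `fobs δ Eo q w` is nonempty. -/
def fobs (δ : X → E → Set X) (Eo : Set E) : Set X → List E → Set X
  | q, [] => q
  | q, e :: w => fobs δ Eo (oR δ Eo q e) w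

/-- The state set `X_obs` of the observer: the (nonempty) subsets of `X`
reachable from the initial observer state `UR(X₀)`. -/
def Xobs (δ : X → E → Set X) (Eo : Set E) (X0 : Set X) : Set (Set X) :=
  {q | ∃ w : List E, fobs δ Eo (UR δ Eo X0) w = q ∧ q.Nonempty}

/-- `y` is a run of the automaton from `x` over the string `s`:
`y 0 = x` and `y (j+1) ∈ δ (y j) (s[j])` for all `j < |s|`. -/
def IsRun (δ : X → E → Set X) (x : X) (s : List E) (y : ℕ → X) : Prop :=
  y 0 = x ∧ ∀ j : Fin s.length, y (j.val + 1) ∈ δ (y j.val) (s.get j)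

/-- There is a non-secret run of the automaton from `x` to `x'` over `s`
(all states of the run except possibly the first one are non-secret). -/
def NonSecretRunTo (δ : X → E → Set X) (XS : Set X) (x : X) (s : List E) (x' : X) : Prop :=
  ∃ y : ℕ → X, IsRun δ x s y ∧ (∀ j, 1 ≤ j → j ≤ s.length → y j ∉ XS) ∧ y s.length = x'

/-- `K`-step weak opacity. -/
def KStepWeakOpaque (δ : X → E → Set X) (Eo : Set E) (X0 XS : Set X) (K : ℕ) : Prop :=
  ∀ x0 ∈ X0, ∀ s t : List E,
    (dStr δ x0 (s ++ t)).Nonempty →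
    (dStr δ x0 s ∩ XS).Nonempty →
    (dSet δ (dStr δ x0 s ∩ XS) t).Nonempty →
    (proj Eo t).length ≤ K →
    ∃ x0' ∈ X0, ∃ s' t' : List E,
      (dStr δ x0' (s' ++ t')).Nonempty ∧
      proj Eo s' = proj Eo s ∧ proj Eo t' = proj Eo t ∧
      (dStr δ x0' s' ∩ XSᶜ).Nonempty ∧
      (dSet δ (dStr δ x0' s' ∩ XSᶜ) t').Nonempty

/-- Infinite-step weak opacity. -/
def InfStepWeakOpaque (δ : X → E → Set X) (Eo : Set E) (X0 XS : Set X) : Prop :=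
  ∀ x0 ∈ X0, ∀ s t : List E,
    (dStr δ x0 (s ++ t)).Nonempty →
    (dStr δ x0 s ∩ XS).Nonempty →
    (dSet δ (dStr δ x0 s ∩ XS) t).Nonempty →
    ∃ x0' ∈ X0, ∃ s' t' : List E,
      (dStr δ x0' (s' ++ t')).Nonempty ∧
      proj Eo s' = proj Eo s ∧ proj Eo t' = proj Eo t ∧
      (dStr δ x0' s' ∩ XSᶜ).Nonempty ∧
      (dSet δ (dStr δ x0' s' ∩ XSᶜ) t').Nonempty

/-- `K`-step strong opacity. -/
def KStepStrongOpaque (δ : X → E → Set X) (Eo : Set E) (X0 XS : Set X) (K : ℕ) : Prop :=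
  ∀ x0 ∈ X0, ∀ s t : List E,
    (dStr δ x0 (s ++ t)).Nonempty →
    (dStr δ x0 s ∩ XS).Nonempty →
    (dSet δ (dStr δ x0 s ∩ XS) t).Nonempty →
    (proj Eo t).length ≤ K →
    ∃ x0' ∈ X0, ∃ ω : List E,
      (dStr δ x0' ω).Nonempty ∧
      proj Eo ω = proj Eo (s ++ t) ∧
      ∃ y : ℕ → X, IsRun δ x0' ω y ∧
        ∀ j ≤ ω.length,
          (proj Eo ω).length - (proj Eo (ω.take j)).length ≤ K → y j ∉ XS

/-- Infinite-step strong opacity. -/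
def InfStepStrongOpaque (δ : X → E → Set X) (Eo : Set E) (X0 XS : Set X) : Prop :=
  ∀ x0 ∈ X0, ∀ s t : List E,
    (dStr δ x0 (s ++ t)).Nonempty →
    (dStr δ x0 s ∩ XS).Nonempty →
    (dSet δ (dStr δ x0 s ∩ XS) t).Nonempty →
    ∃ x0' ∈ X0 ∩ XSᶜ, ∃ ω : List E,
      (dStr δ x0' ω).Nonempty ∧
      proj Eo ω = proj Eo (s ++ t) ∧
      ∃ y : ℕ → X, IsRun δ x0' ω y ∧ ∀ j ≤ ω.length, y j ∉ XS

/-- Child of a node `(x₁, x₂)` of a state-tree associated with observer state `q'`,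
via observable event `e`. -/
def treeChild (δ : X → E → Set X) (Eo : Set E) (q' : Set X) (n : Set X × Set X)
    (e : E) : Set X × Set X :=
  ({x ∈ oR δ Eo q' e | ∃ x' ∈ n.1, x ∈ oR δ Eo {x'} e},
   {x ∈ oR δ Eo q' e | ∃ x' ∈ n.2, x ∈ oR δ Eo {x'} e})

/-- Descend in a state-tree from node `n` (associated with observer state `q'`)
along the observation sequence `w`. -/
def treeNodeAux (δ : X → E → Set X) (Eo : Set E) :
    Set X → Set X × Set X → List E → Set X × Set X
  | _, n, [] => n
  | q', n, e :: w => treeNodeAux δ Eo (oR δ Eo q' e) (treeChild δ Eo q' n e) w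

/-- The node of the state-tree rooted at observer state `q` reached from the
root `(q ∩ X_S, q ∩ X_NS)` along the observation sequence `w`. -/
def treeNode (δ : X → E → Set X) (Eo : Set E) (XS : Set X) (q : Set X)
    (w : List E) : Set X × Set X :=
  treeNodeAux δ Eo q (q ∩ XS, q ∩ XSᶜ) w

/-- `X_st`: all nodes of the depth-`K` state-trees rooted at observer states
intersecting the secret states. -/
def Xst (δ : X → E → Set X) (Eo : Set E) (X0 XS : Set X) (K : ℕ) :
    Set (Set X × Set X) :=
  {n | ∃ q ∈ Xobs δ Eo X0, (q ∩ XS).Nonempty ∧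
    ∃ w : List E, w.length ≤ K ∧ (fobs δ Eo q w).Nonempty ∧ treeNode δ Eo XS q w = n}

/-- Initial states of the secret-involved projected automaton.  A state of
`G_SP` is a pair `(x, b)` where `b = false` encodes the tag `N` and `b = true`
encodes the tag `Y`. -/
def SPinit (δ : X → E → Set X) (Eo : Set E) (X0 XS : Set X) : Set (X × Bool) :=
  {p | p.1 ∈ UR δ Eo X0 ∧
    (p.2 = false ↔
      ∃ x0 ∈ X0 ∩ XSᶜ, ∃ s : List E, proj Eo s = [] ∧ NonSecretRunTo δ XS x0 s p.1)}

/-- Transition relation of the secret-involved projected automaton. -/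
def SPtrans (δ : X → E → Set X) (Eo : Set E) (XS : Set X) (p : X × Bool) (e : E) :
    Set (X × Bool) :=
  {p' | p'.1 ∈ oR δ Eo {p.1} e ∧
    ((p.1 ∉ XS ∧
        (p'.2 = false ↔ ∃ s : List E, proj Eo s = [e] ∧ NonSecretRunTo δ XS p.1 s p'.1)) ∨
     (p.1 ∈ XS ∧ p.2 = true ∧ p'.2 = true))}

/-- `X_SP`: states of the secret-involved projected automaton reachable from
its initial states. -/
def XSP (δ : X → E → Set X) (Eo : Set E) (X0 XS : Set X) : Set (X × Bool) :=
  {p | ∃ p0 ∈ SPinit δ Eo X0 XS, ∃ w : List E, p ∈ dStr (SPtrans δ Eo XS) p0 w}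

/-- Child of a node `(x₁, x₂)` of a secret-unvisited state-tree associated with
observer state `q'`, via observable event `e`. -/
def sstChild (δ : X → E → Set X) (Eo : Set E) (XS : Set X) (q' : Set X)
    (n : Set X × Set X) (e : E) : Set X × Set X :=
  (oR δ Eo q' e,
   {x ∈ oR δ Eo q' e | ∃ x' ∈ n.2,
      x ∈ oR δ Eo {x'} e ∧ (x, false) ∈ SPtrans δ Eo XS (x', false) e})

/-- Descend in a secret-unvisited state-tree from node `n` (associated with
observer state `q'`) along the observation sequence `w`. -/
def sstNodeAux (δ : X → E → Set X) (Eo : Set E) (XS : Set X) :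
    Set X → Set X × Set X → List E → Set X × Set X
  | _, n, [] => n
  | q', n, e :: w => sstNodeAux δ Eo XS (oR δ Eo q' e) (sstChild δ Eo XS q' n e) w

/-- The node of the secret-unvisited state-tree (SST) rooted at observer state
`q` reached from the root `(q, {x ∈ q ∩ X_NS : x_N ∈ X_SP})` along the
observation sequence `w`. -/
def sstNode (δ : X → E → Set X) (Eo : Set E) (X0 XS : Set X) (q : Set X)
    (w : List E) : Set X × Set X :=
  sstNodeAux δ Eo XS q
    (q, {x | x ∈ q ∧ x ∉ XS ∧ (x, false) ∈ XSP δ Eo X0 XS}) w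

/-- `X_st^G`: all nodes of the depth-`K` SSTs rooted at observer states
intersecting the secret states. -/
def XstSST (δ : X → E → Set X) (Eo : Set E) (X0 XS : Set X) (K : ℕ) :
    Set (Set X × Set X) :=
  {n | ∃ q ∈ Xobs δ Eo X0, (q ∩ XS).Nonempty ∧
    ∃ w : List E, w.length ≤ K ∧ (fobs δ Eo q w).Nonempty ∧ sstNode δ Eo X0 XS q w = n}

/-- Initial state of the verifier. -/
def vInit (δ : X → E → Set X) (Eo : Set E) (X0 XS : Set X) : Set X × Set X :=
  (UR δ Eo X0, {x ∈ UR δ Eo X0 | (x, false) ∈ SPinit δ Eo X0 XS})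

/-- Transition function of the verifier, extended to observation sequences
(totalized: the verifier step is defined exactly when the corresponding
observer step is, i.e. exactly when the first component stays nonempty). -/
def fv (δ : X → E → Set X) (Eo : Set E) (XS : Set X) :
    Set X × Set X → List E → Set X × Set X
  | v, [] => v
  | v, e :: w => fv δ Eo XS
      (oR δ Eo v.1 e,
       {x' ∈ oR δ Eo v.1 e | ∃ x ∈ v.2, (x', false) ∈ SPtrans δ Eo XS (x, false) e}) w

/-- `X_v`: the verifier states reachable from the initial verifier state. -/
def Xv (δ : X → E → Set X) (Eo : Set E) (X0 XS : Set X) : Set (Set X × Set X) :=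
  {v | ∃ w : List E, fv δ Eo XS (vInit δ Eo X0 XS) w = v ∧ v.1.Nonempty}

end Opacity

open Opacity

section Aux

variable {X E : Type*} (δ : X → E → Set X) (Eo : Set E)

lemma proj_append (s t : List E) : proj Eo (s ++ t) = proj Eo s ++ proj Eo t := by
  induction s with
  | nil => simp [proj]
  | cons e s ih =>
    simp only [List.cons_append, proj]
    split <;> simp [ih]

lemma mem_dStr_append {s t : List E} {x x₁ x₂ : X}
    (h1 : x₁ ∈ dStr δ x s) (h2 : x₂ ∈ dStr δ x₁ t) : x₂ ∈ dStr δ x (s ++ t) := by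
  induction s generalizing x with
  | nil => simp [dStr] at h1; subst h1; exact h2
  | cons e s ih =>
    simp only [dStr, Set.mem_iUnion, List.cons_append] at h1 ⊢
    obtain ⟨x', hx', h1⟩ := h1
    exact ⟨x', hx', ih h1⟩

lemma split_reach : ∀ (s : List E) (x x'' : X) (e : E) (w : List E),
    proj Eo s = e :: w → x'' ∈ dStr δ x s →
    ∃ x₁ ∈ oR δ Eo {x} e, ∃ t, proj Eo t = w ∧ x'' ∈ dStr δ x₁ t := by
  intro s
  induction s with
  | nil => intro x x'' e w hp; simp [proj] at hp
  | cons a s ih =>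
    intro x x'' e w hp hx
    simp only [dStr, Set.mem_iUnion] at hx
    obtain ⟨x', hx', hmem⟩ := hx
    by_cases ha : a ∈ Eo
    · simp only [proj, if_pos ha, List.cons.injEq] at hp
      obtain ⟨rfl, hps⟩ := hp
      refine ⟨x', ⟨x, rfl, [a], ?_, ?_⟩, s, hps, hmem⟩
      · simp only [dStr, Set.mem_iUnion]
        exact ⟨x', hx', rfl⟩
      · simp [proj, ha]
    · simp only [proj, if_neg ha] at hp
      obtain ⟨x₁, hx₁, t, hpt, hxt⟩ := ih x' x'' e w hp hmem
      obtain ⟨y, hy, s₁, hm, hp1⟩ := hx₁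
      rcases hy with rfl
      refine ⟨x₁, ⟨x, rfl, a :: s₁, ?_, ?_⟩, t, hpt, hxt⟩
      · simp only [dStr, Set.mem_iUnion]
        exact ⟨y, hx', hm⟩
      · simp [proj, ha, hp1]

lemma fobs_fwd : ∀ (w : List E) (q : Set X) (x'' : X), x'' ∈ fobs δ Eo q w →
    ∃ x ∈ q, ∃ s, proj Eo s = w ∧ x'' ∈ dStr δ x s := by
  intro w
  induction w with
  | nil => intro q x'' h; exact ⟨x'', h, [], by simp [proj], by simp [dStr]⟩
  | cons e w ih =>
    intro q x'' h
    obtain ⟨x₁, hx₁, s₂, hps₂, hmem⟩ := ih _ _ h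
    obtain ⟨x, hx, s₁, hm1, hp1⟩ := hx₁
    refine ⟨x, hx, s₁ ++ s₂, ?_, mem_dStr_append δ hm1 hmem⟩
    rw [proj_append, hp1, hps₂]; rfl

/-- `q` is closed under unobservable reach. -/
def SilClosed (q : Set X) : Prop :=
  ∀ x ∈ q, ∀ t : List E, proj Eo t = [] → ∀ z ∈ dStr δ x t, z ∈ q

lemma silClosed_UR (X0 : Set X) : SilClosed δ Eo (UR δ Eo X0) := by
  intro x hx t hpt z hz
  obtain ⟨x0, hx0, s, hs, hps⟩ := hx
  exact ⟨x0, hx0, s ++ t, mem_dStr_append δ hs hz, by rw [proj_append, hps, hpt]; rfl⟩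

lemma silClosed_oR (q : Set X) (e : E) : SilClosed δ Eo (oR δ Eo q e) := by
  intro x hx t hpt z hz
  obtain ⟨x', hx', s, hs, hps⟩ := hx
  exact ⟨x', hx', s ++ t, mem_dStr_append δ hs hz, by rw [proj_append, hps, hpt]; simp⟩

lemma mem_fobs_of : ∀ (w : List E) (q : Set X), SilClosed δ Eo q →
    ∀ x ∈ q, ∀ s, proj Eo s = w → ∀ z ∈ dStr δ x s, z ∈ fobs δ Eo q w := by
  intro w
  induction w with
  | nil => intro q hq x hx s hps z hz; exact hq x hx s hps z hz
  | cons e w ih =>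
    intro q hq x hx s hps z hz
    obtain ⟨x₁, hx₁, t, hpt, hzt⟩ := split_reach δ Eo s x z e w hps hz
    obtain ⟨y, hy, s₁, hm, hp⟩ := hx₁
    rcases hy with rfl
    exact ih (oR δ Eo q e) (silClosed_oR δ Eo q e) x₁ ⟨y, hx, s₁, hm, hp⟩ t hpt z hzt

lemma tree_cover : ∀ (w : List E) (q' : Set X) (n : Set X × Set X),
    q' ⊆ n.1 ∪ n.2 →
    fobs δ Eo q' w ⊆ (treeNodeAux δ Eo q' n w).1 ∪ (treeNodeAux δ Eo q' n w).2 := by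
  intro w
  induction w with
  | nil => intro q' n h; exact h
  | cons e w ih =>
    intro q' n h
    refine ih (oR δ Eo q' e) (treeChild δ Eo q' n e) ?_
    intro x hx
    obtain ⟨x', hx', s, hm, hp⟩ := hx
    rcases h hx' with h1 | h1
    · exact Or.inl ⟨⟨x', hx', s, hm, hp⟩, x', h1, x', rfl, s, hm, hp⟩
    · exact Or.inr ⟨⟨x', hx', s, hm, hp⟩, x', h1, x', rfl, s, hm, hp⟩

lemma tree_fst_fwd : ∀ (w : List E) (q' : Set X) (n : Set X × Set X) (z : X),
    z ∈ (treeNodeAux δ Eo q' n w).1 →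
    ∃ x ∈ n.1, ∃ s, proj Eo s = w ∧ z ∈ dStr δ x s := by
  intro w
  induction w with
  | nil => intro q' n z h; exact ⟨z, h, [], by simp [proj], by simp [dStr]⟩
  | cons e w ih =>
    intro q' n z h
    obtain ⟨x₁, hx₁, s₂, hps₂, hmem⟩ := ih _ _ _ h
    obtain ⟨-, x', hx', y, hy, s₁, hm1, hp1⟩ := hx₁
    rcases hy with rfl
    refine ⟨y, hx', s₁ ++ s₂, ?_, mem_dStr_append δ hm1 hmem⟩
    rw [proj_append, hp1, hps₂]; rfl

lemma tree_snd_ne : ∀ (w : List E) (q' : Set X) (n : Set X × Set X),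
    n.2 ⊆ q' → ∀ x ∈ n.2, ∀ t, proj Eo t = w → (dStr δ x t).Nonempty →
    (treeNodeAux δ Eo q' n w).2.Nonempty := by
  intro w
  induction w with
  | nil => intro q' n _ x hx t _ _; exact ⟨x, hx⟩
  | cons e w ih =>
    intro q' n hsub x hx t hpt hne
    obtain ⟨z, hz⟩ := hne
    obtain ⟨x₁, hx₁, t₂, hpt₂, hzt₂⟩ := split_reach δ Eo t x z e w hpt hz
    obtain ⟨y, hy, s₁, hm, hp⟩ := hx₁
    rcases hy with rfl
    have hx₁q : x₁ ∈ oR δ Eo q' e := ⟨y, hsub hx, s₁, hm, hp⟩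
    refine ih (oR δ Eo q' e) (treeChild δ Eo q' n e) ?_ x₁
      ⟨hx₁q, y, hx, y, rfl, s₁, hm, hp⟩ t₂ hpt₂ ⟨z, hzt₂⟩
    intro a ha
    exact ha.1

end Aux

/-- If some node `(x₁, x₂)` occurring in the depth-`K` state-trees
rooted at the observer states intersecting the secret states satisfies `x₂ = ∅`, then
the NFA `G` is not infinite-step weak opaque. -/
theorem not_infStepWeakOpaque_of_empty_stateTree_node
    {X E : Type*} [Finite X] [Finite E]
    (δ : X → E → Set X) (Eo : Set E) (X0 XS : Set X) (K : ℕ)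
    (h : ∃ n ∈ Xst δ Eo X0 XS K, n.2 = ∅) :
    ¬ InfStepWeakOpaque δ Eo X0 XS := by
  obtain ⟨n, ⟨q, ⟨w₀, hq, hqne⟩, -, w, -, hfne, hnode⟩, hn2⟩ := h
  intro hop
  -- the root node
  set root : Set X × Set X := (q ∩ XS, q ∩ XSᶜ) with hroot
  have hcover : q ⊆ root.1 ∪ root.2 := by
    intro x hx
    by_cases hxs : x ∈ XS
    · exact Or.inl ⟨hx, hxs⟩
    · exact Or.inr ⟨hx, hxs⟩
  -- get an element of fobs q w, show it lies in the first component
  obtain ⟨y, hy⟩ := hfne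
  have hy' := tree_cover δ Eo w q root hcover hy
  rw [show treeNodeAux δ Eo q root w = n from hnode] at hy'
  have hy1 : y ∈ n.1 := by
    rcases hy' with h1 | h1
    · exact h1
    · rw [hn2] at h1; exact absurd h1 (Set.notMem_empty y)
  -- pull back to a secret state in q with a string projecting to w
  have hfst : ∃ x ∈ root.1, ∃ s, proj Eo s = w ∧ y ∈ dStr δ x s := by
    have := tree_fst_fwd δ Eo w q root
    rw [show treeNodeAux δ Eo q root w = n from hnode] at this
    exact this y hy1
  obtain ⟨xs, ⟨hxsq, hxsS⟩, t, hpt, hyt⟩ := hfst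
  -- pull back xs ∈ q = fobs (UR X0) w₀ to an initial state
  have hxsq' : xs ∈ fobs δ Eo (UR δ Eo X0) w₀ := by rw [hq]; exact hxsq
  obtain ⟨xu, hxu, s₂, hps₂, hxs₂⟩ := fobs_fwd δ Eo w₀ _ xs hxsq'
  obtain ⟨x0, hx0, s₁, hxs₁, hps₁⟩ := hxu
  have hpσ : proj Eo (s₁ ++ s₂) = w₀ := by rw [proj_append, hps₁, hps₂]; rfl
  have hxsσ : xs ∈ dStr δ x0 (s₁ ++ s₂) := mem_dStr_append δ hxs₁ hxs₂
  -- apply opacity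
  obtain ⟨x0', hx0', s', t', hne', hps', hpt', -, hdset'⟩ :=
    hop x0 hx0 (s₁ ++ s₂) t
      ⟨y, mem_dStr_append δ hxsσ hyt⟩
      ⟨xs, hxsσ, hxsS⟩
      (by
        refine ⟨y, ?_⟩
        simp only [dSet, Set.mem_iUnion]
        exact ⟨xs, ⟨hxsσ, hxsS⟩, hyt⟩)
  -- extract a non-secret state in q with a continuation projecting to w
  obtain ⟨z, hz⟩ := hdset'
  simp only [dSet, Set.mem_iUnion] at hz
  obtain ⟨x'', ⟨hx''s', hx''ns⟩, hzx''⟩ := hz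
  have hx0'UR : x0' ∈ UR δ Eo X0 := ⟨x0', hx0', [], by simp [dStr], by simp [proj]⟩
  have hx''q : x'' ∈ q := by
    rw [← hq]
    exact mem_fobs_of δ Eo w₀ (UR δ Eo X0) (silClosed_UR δ Eo X0) x0' hx0'UR s'
      (by rw [hps', hpσ]) x'' hx''s'
  -- contradiction with n.2 = ∅
  have hne2 : (treeNodeAux δ Eo q root w).2.Nonempty := by
    refine tree_snd_ne δ Eo w q root ?_ x'' ⟨hx''q, hx''ns⟩ t' (by rw [hpt', hpt]) ⟨z, hzx''⟩
    intro a ha; exact ha.1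
  rw [show treeNodeAux δ Eo q root w = n from hnode, hn2] at hne2
  exact hne2.ne_empty rfl
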